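/- If d ∈ D then 3 · d ∈ D. -/

import Mathlib

/-- `φ(p,q) = (p₁−q₁)² + (p₂−q₂)²` for `p, q ∈ ℂ²`. -/
noncomputable def phi2 (p q : Fin 2 → ℂ) : ℂ := (p 0 - q 0) ^ 2 + (p 1 - q 1) ^ 2

/-- `D` is the set of real `d > 0` such that for all `x, y ∈ ℝ²` with `|x−y| = d` there is a
finite set `S` with `{x,y} ⊆ S ⊆ ℝ²` such that every map `f : S → ℂ²` preserving unit
distance (i.e. `φ(f u, f v) = 1` whenever `u, v ∈ S` and `|u−v| = 1`) satisfies
`φ(f x, f y) = d²`. -/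
noncomputable def D : Set ℝ :=
  {d | 0 < d ∧ ∀ x y : EuclideanSpace ℝ (Fin 2), dist x y = d →
    ∃ S : Set (EuclideanSpace ℝ (Fin 2)), S.Finite ∧ x ∈ S ∧ y ∈ S ∧
      ∀ f : EuclideanSpace ℝ (Fin 2) → (Fin 2 → ℂ),
        (∀ u ∈ S, ∀ v ∈ S, dist u v = 1 → phi2 (f u) (f v) = 1) →
        phi2 (f x) (f y) = (d : ℂ) ^ 2}

/-!
If `|x - q| = √3 d`, then `x a q b` is a rhombus of side `d` for suitable `a, b`, made of the two
equilateral triangles `x a b` and `q a b`. Once all five of its edges of length `d` are forced to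
have `φ`-length `d²`, an algebraic computation leaves only two possibilities for a unit-distance
preserving `f`: `f q = f x` or `φ(f q, f x) = 3 d²`. The first one is excluded by a point `r` with
`|r - q| = d` and `|r - x| = √3 d`: the rhombus over `x r` forces `φ(f r, f x) ∈ {0, 3 d²}`,
whereas `f q = f x` would give `φ(f r, f x) = φ(f r, f q) = d²`. Hence `√3 d ∈ D`, and applying
this twice gives `3 d ∈ D`.
-/

open Complex

/-- With `v = a + b`, both `w` and `v` are orthogonal to the non-isotropic vector `a - b`, so
`w × v = 0`. Lagrange's identity `|w|² |v|² = ⟨w, v⟩² + (w × v)²` with `|v|² = 3c` and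
`⟨w, v⟩ = |w|²` then gives `|w|² (|w|² - 3c) = 0`, and `⟨w, v⟩ = w × v = 0` forces `w = 0`. -/
lemma eq_zero_or_sq_add_sq_eq_three_mul {K : Type*} [Field K] [CharZero K]
    {a₀ a₁ b₀ b₁ w₀ w₁ c : K} (hc : c ≠ 0)
    (ha : a₀ ^ 2 + a₁ ^ 2 = c) (hb : b₀ ^ 2 + b₁ ^ 2 = c)
    (hab : (a₀ - b₀) ^ 2 + (a₁ - b₁) ^ 2 = c)
    (hwa : (w₀ - a₀) ^ 2 + (w₁ - a₁) ^ 2 = c) (hwb : (w₀ - b₀) ^ 2 + (w₁ - b₁) ^ 2 = c) :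
    (w₀ = 0 ∧ w₁ = 0) ∨ w₀ ^ 2 + w₁ ^ 2 = 3 * c := by
  have hwu : w₀ * (a₀ - b₀) + w₁ * (a₁ - b₁) = 0 := by
    have : 2 * (w₀ * (a₀ - b₀) + w₁ * (a₁ - b₁)) = 0 := by
      linear_combination hwb - hwa + ha - hb
    simpa using this
  have hcross : w₀ * (a₁ + b₁) - w₁ * (a₀ + b₀) = 0 := by
    have : (w₀ * (a₁ + b₁) - w₁ * (a₀ + b₀)) * c = 0 := by
      linear_combination ((a₀ - b₀) * (a₁ + b₁) - (a₁ - b₁) * (a₀ + b₀)) * hwu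
        + ((a₁ - b₁) * w₀ - (a₀ - b₀) * w₁) * (ha - hb)
        - (w₀ * (a₁ + b₁) - w₁ * (a₀ + b₀)) * hab
    simpa [hc] using this
  have hwv : w₀ * (a₀ + b₀) + w₁ * (a₁ + b₁) = w₀ ^ 2 + w₁ ^ 2 := by
    linear_combination -(hwa + hwb - ha - hb) / 2
  have hvv : (a₀ + b₀) ^ 2 + (a₁ + b₁) ^ 2 = 3 * c := by
    linear_combination 2 * ha + 2 * hb - hab
  have hquad : (w₀ ^ 2 + w₁ ^ 2) * (w₀ ^ 2 + w₁ ^ 2 - 3 * c) = 0 := by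
    linear_combination (w₀ ^ 2 + w₁ ^ 2) * hvv
      - (w₀ * (a₀ + b₀) + w₁ * (a₁ + b₁) + w₀ ^ 2 + w₁ ^ 2) * hwv
      - (w₀ * (a₁ + b₁) - w₁ * (a₀ + b₀)) * hcross
  rcases mul_eq_zero.1 hquad with hw | hw
  · have h3c : 3 * c ≠ 0 := mul_ne_zero three_ne_zero hc
    refine Or.inl ⟨?_, ?_⟩
    · have : w₀ * (3 * c) = 0 := by
        linear_combination -w₀ * hvv + (a₀ + b₀) * hwv + (a₁ + b₁) * hcross + (a₀ + b₀) * hw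
      simpa [h3c] using this
    · have : w₁ * (3 * c) = 0 := by
        linear_combination -w₁ * hvv + (a₁ + b₁) * hwv - (a₀ + b₀) * hcross + (a₁ + b₁) * hw
      simpa [h3c] using this
  · exact Or.inr (sub_eq_zero.1 hw)

lemma phi2_comm (p q : Fin 2 → ℂ) : phi2 p q = phi2 q p := by
  unfold phi2; ring

lemma phi2_self (p : Fin 2 → ℂ) : phi2 p p = 0 := by
  simp [phi2]

lemma eq_or_phi2_eq_three_mul {X A B W : Fin 2 → ℂ} {c : ℂ} (hc : c ≠ 0)
    (hA : phi2 A X = c) (hB : phi2 B X = c) (hAB : phi2 A B = c)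
    (hWA : phi2 W A = c) (hWB : phi2 W B = c) :
    W = X ∨ phi2 W X = 3 * c := by
  unfold phi2 at *
  rcases eq_zero_or_sq_add_sq_eq_three_mul (a₀ := A 0 - X 0) (a₁ := A 1 - X 1)
    (b₀ := B 0 - X 0) (b₁ := B 1 - X 1) (w₀ := W 0 - X 0) (w₁ := W 1 - X 1) hc hA hB
    (by linear_combination hAB) (by linear_combination hWA) (by linear_combination hWB)
    with ⟨h₀, h₁⟩ | h
  · left
    funext i
    fin_cases i
    · exact sub_eq_zero.1 h₀
    · exact sub_eq_zero.1 h₁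
  · exact Or.inr h

lemma dist_add_sub_mul_left (x q z : ℂ) : dist (x + (q - x) * z) x = dist q x * ‖z‖ := by
  rw [dist_eq_norm, dist_eq_norm, add_sub_cancel_left, norm_mul]

lemma dist_add_sub_mul_right (x q z : ℂ) : dist q (x + (q - x) * z) = dist q x * ‖1 - z‖ := by
  rw [dist_eq_norm, dist_eq_norm, ← norm_mul]
  ring_nf

lemma norm_eq_sqrt_three_inv {z : ℂ} (h : normSq z = 3⁻¹) : ‖z‖ = (√3)⁻¹ := by
  rw [norm_def, h, Real.sqrt_inv]

lemma exists_rhombus {x q : ℂ} {d : ℝ} (h : dist q x = √3 * d) :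
    ∃ a b : ℂ, dist a x = d ∧ dist b x = d ∧ dist a b = d ∧ dist q a = d ∧ dist q b = d := by
  set ω : ℂ := ⟨1 / 2, √3 / 6⟩
  have h3 : √3 ^ 2 = 3 := Real.sq_sqrt zero_le_three
  have hω : ‖ω‖ = (√3)⁻¹ := norm_eq_sqrt_three_inv <| by
    norm_num [ω, normSq_apply]; linear_combination h3 / 36
  have hω' : ‖1 - ω‖ = (√3)⁻¹ := norm_eq_sqrt_three_inv <| by
    norm_num [ω, normSq_apply]; linear_combination h3 / 36
  have hω'' : ‖2 * ω - 1‖ = (√3)⁻¹ := norm_eq_sqrt_three_inv <| by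
    norm_num [ω, normSq_apply]; linear_combination h3 / 9
  have hd : √3 * d * (√3)⁻¹ = d := by field_simp
  have hab : x + (q - x) * ω - (x + (q - x) * (1 - ω)) = (q - x) * (2 * ω - 1) := by ring
  refine ⟨x + (q - x) * ω, x + (q - x) * (1 - ω), ?_, ?_, ?_, ?_, ?_⟩
  · rw [dist_add_sub_mul_left, h, hω, hd]
  · rw [dist_add_sub_mul_left, h, hω', hd]
  · rw [dist_eq_norm, hab, norm_mul, ← dist_eq_norm, h, hω'', hd]
  · rw [dist_add_sub_mul_right, h, hω', hd]
  · rw [dist_add_sub_mul_right, sub_sub_cancel, h, hω, hd]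

lemma exists_dist_eq_sqrt_three_mul_of_dist_eq {x q : ℂ} {d : ℝ} (h : dist q x = √3 * d) :
    ∃ r : ℂ, dist r x = √3 * d ∧ dist r q = d := by
  -- `|ζ| = 1` and `|1 - ζ|² = 1/3`: `r` is `q` rotated about `x` until `|r - q| = |q - x| / √3`.
  set ζ : ℂ := ⟨5 / 6, √11 / 6⟩
  have h11 : √11 ^ 2 = 11 := Real.sq_sqrt (by norm_num)
  have hζ : ‖ζ‖ = 1 := by
    rw [norm_def, Real.sqrt_eq_one, normSq_mk]; linear_combination h11 / 36
  have hζ' : ‖1 - ζ‖ = (√3)⁻¹ := norm_eq_sqrt_three_inv <| by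
    norm_num [ζ, normSq_apply]; linear_combination h11 / 36
  refine ⟨x + (q - x) * ζ, by rw [dist_add_sub_mul_left, h, hζ, mul_one], ?_⟩
  rw [dist_comm, dist_add_sub_mul_right, h, hζ']
  field_simp

local notation "ℝ²" => EuclideanSpace ℝ (Fin 2)

def PreservesUnitDist (S : Set ℝ²) (f : ℝ² → Fin 2 → ℂ) : Prop :=
  ∀ u ∈ S, ∀ v ∈ S, dist u v = 1 → phi2 (f u) (f v) = 1

lemma PreservesUnitDist.mono {S T : Set ℝ²} {f : ℝ² → Fin 2 → ℂ} (hT : PreservesUnitDist T f)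
    (hST : S ⊆ T) : PreservesUnitDist S f :=
  fun u hu v hv => hT u (hST hu) v (hST hv)

lemma exists_finite_forcing_set {d : ℝ} (hd : d ∈ D) {P : Set (ℝ² × ℝ²)} (hP : P.Finite)
    (hPd : ∀ p ∈ P, dist p.1 p.2 = d) :
    ∃ S : Set ℝ², S.Finite ∧ (∀ p ∈ P, p.1 ∈ S ∧ p.2 ∈ S) ∧
      ∀ f, PreservesUnitDist S f → ∀ p ∈ P, phi2 (f p.1) (f p.2) = (d : ℂ) ^ 2 := by
  choose! S hSfin hS₁ hS₂ hS using fun p (hp : p ∈ P) => hd.2 p.1 p.2 (hPd p hp)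
  refine ⟨⋃ p ∈ P, S p, hP.biUnion hSfin, fun p hp => ?_, fun f hf p hp => ?_⟩
  · exact ⟨Set.mem_biUnion hp (hS₁ p hp), Set.mem_biUnion hp (hS₂ p hp)⟩
  · exact hS p hp f (hf.mono (Set.subset_biUnion_of_mem hp))

lemma sqrt_three_mul_mem_D {d : ℝ} (hd : d ∈ D) : √3 * d ∈ D := by
  refine ⟨mul_pos (by positivity) hd.1, fun x q hxq => ?_⟩
  set e := orthonormalBasisOneI.repr
  obtain ⟨x, rfl⟩ := e.surjective x
  obtain ⟨q, rfl⟩ := e.surjective q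
  rw [e.dist_map, dist_comm] at hxq
  obtain ⟨a, b, hax, hbx, hab, hqa, hqb⟩ := exists_rhombus hxq
  obtain ⟨r, hrx, hrq⟩ := exists_dist_eq_sqrt_three_mul_of_dist_eq hxq
  obtain ⟨a', b', ha'x, hb'x, ha'b', hra', hrb'⟩ := exists_rhombus hrx
  obtain ⟨S, hSfin, hPS, hforce⟩ := exists_finite_forcing_set hd (Set.toFinite
    {(e a, e x), (e b, e x), (e a, e b), (e q, e a), (e q, e b), (e r, e q),
      (e a', e x), (e b', e x), (e a', e b'), (e r, e a'), (e r, e b')})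
    (by simp only [Set.mem_insert_iff, Set.mem_singleton_iff, forall_eq_or_imp, forall_eq,
      e.dist_map]; exact ⟨hax, hbx, hab, hqa, hqb, hrq, ha'x, hb'x, ha'b', hra', hrb'⟩)
  refine ⟨S, hSfin, (hPS (e a, e x) (by simp)).2, (hPS (e q, e a) (by simp)).1, fun f hf => ?_⟩
  obtain ⟨h₁, h₂, h₃, h₄, h₅, hrq, h₇, h₈, h₉, h₁₀, h₁₁⟩ := by
    simpa only [Set.mem_insert_iff, Set.mem_singleton_iff, forall_eq_or_imp, forall_eq]
      using hforce f hf
  have hc : (d : ℂ) ^ 2 ≠ 0 := pow_ne_zero _ (ofReal_ne_zero.2 hd.1.ne')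
  rcases eq_or_phi2_eq_three_mul hc h₁ h₂ h₃ h₄ h₅ with hqx | hqx
  · rw [hqx] at hrq
    rcases eq_or_phi2_eq_three_mul hc h₇ h₈ h₉ h₁₀ h₁₁ with hrx | hrx
    · rw [hrx, phi2_self] at hrq
      exact absurd hrq.symm hc
    · rw [hrx] at hrq
      exact absurd (by linear_combination hrq / 2) hc
  · rw [phi2_comm, hqx, ofReal_mul, mul_pow, ← ofReal_pow √3, Real.sq_sqrt zero_le_three,
      ofReal_ofNat]

theorem three_mul_mem_D {d : ℝ} (hd : d ∈ D) : 3 * d ∈ D := by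
  have h := sqrt_three_mul_mem_D (sqrt_three_mul_mem_D hd)
  rwa [← mul_assoc, Real.mul_self_sqrt zero_le_three] at h
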